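/- arXiv:0709.2469 — 3 statements merged into one kernel-verified Lean document; each statement's English description precedes it below -/
import Mathlib

section
/- Let k be an algebraically closed field, let m be a natural number, and let h₁, …, h_t ∈ k[x,y] (t ≥ 1) be polynomials in two variables, each of total degree at most m. Suppose that every common divisor of h₁, …, h_t in k[x,y] is a unit (a nonzero constant), i.e. the greatest common divisor of h₁, …, h_t is 1. Then the set of common roots {(α,β) ∈ k² : h_i(α,β) = 0 for all i = 1, …, t} has at most m² elements. -/
/-!
Fix a nonzero `f = h i₀`. Each irreducible factor `p` of `f` cuts out a proper subspace of
coefficient vectors `c` with `p ∣ ∑ cᵢ hᵢ` (proper because the `hᵢ` have no common factor), and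
`k` is infinite, so some `g = ∑ cᵢ hᵢ` is coprime to `f`; it suffices to bound the common zeros
of `f` and `g`.

For this weak Bézout bound let `a = deg f`, `b = deg g`, let `S` be `e` common zeros and `V n`
the polynomials of degree `≤ n`, of dimension `(n + 2).choose 2`. Inside `V (a + b + e)` both
`f • V (b + e)` and `g • V (a + e)` vanish on `S`, and by interpolation the polynomials vanishing
on `S` have codimension `e`. Coprimality forces the intersection of the two pieces into
`f g • V e`, and comparing dimensions leaves exactly `e ≤ a b`.
-/

open Module MvPolynomial

theorem Set.encard_le_coe_of_forall_finset {α : Type*} {s : Set α} {n : ℕ}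
    (h : ∀ t : Finset α, ↑t ⊆ s → t.card ≤ n) : s.encard ≤ n := by
  by_contra! hlt
  obtain ⟨t, hts, ht⟩ := Set.exists_subset_encard_eq (Order.add_one_le_of_lt hlt)
  have htfin : t.Finite := Set.finite_of_encard_eq_coe ht
  have := h htfin.toFinset (by simpa using hts)
  rw [htfin.encard_eq_coe_toFinset_card] at ht
  norm_cast at ht
  omega

theorem Nat.choose_two_add_add_add_choose_two (a b e : ℕ) :
    (a + b + e + 2).choose 2 + (e + 2).choose 2 =
      (a + e + 2).choose 2 + (b + e + 2).choose 2 + a * b := by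
  qify
  simp only [Nat.cast_choose_two]
  push_cast
  ring

theorem Finsupp.natCard_setOf_sum_le_fin_two (e : ℕ) :
    Nat.card {n : Fin 2 →₀ ℕ | (n.sum fun _ d => d) ≤ e} = (e + 2).choose 2 := by
  have hsum (n : Fin 2 →₀ ℕ) : (n.sum fun _ d => d) = n 0 + n 1 := by
    rw [Finsupp.sum_fintype _ _ fun _ => rfl, Fin.sum_univ_two]
  let T := (Finset.range (e + 1)).sigma fun i => Finset.HasAntidiagonal.antidiagonal i
  let equiv : {n : Fin 2 →₀ ℕ | (n.sum fun _ d => d) ≤ e} ≃ T :=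
    { toFun n := ⟨⟨n.1 0 + n.1 1, (n.1 0, n.1 1)⟩, Finset.mem_sigma.2
        ⟨Finset.mem_range.2 (Nat.lt_succ_of_le (hsum n.1 ▸ n.2)),
          Finset.HasAntidiagonal.mem_antidiagonal.2 rfl⟩⟩
      invFun x := ⟨Finsupp.equivFunOnFinite.symm ![x.1.2.1, x.1.2.2], by
        have hx := Finset.mem_sigma.1 x.2
        simp only [Finset.mem_range, Finset.HasAntidiagonal.mem_antidiagonal] at hx
        simpa [hsum, hx.2] using Nat.le_of_lt_succ hx.1⟩
      left_inv n := by ext i; fin_cases i <;> simp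
      right_inv x := by
        obtain ⟨⟨i, a, b⟩, hx⟩ := x
        simp only [T, Finset.mem_sigma, Finset.HasAntidiagonal.mem_antidiagonal] at hx
        ext <;> simp [hx.2] }
  rw [Nat.card_congr equiv, Nat.card_eq_fintype_card, Fintype.card_coe, Finset.card_sigma]
  simpa using Nat.sum_range_add_choose e 1

theorem Submodule.finrank_inf_ker_add_finrank {K M N : Type*} [DivisionRing K] [AddCommGroup M]
    [Module K M] [AddCommGroup N] [Module K N] (φ : M →ₗ[K] N) (W : Submodule K M)
    [FiniteDimensional K W] (hW : W.map φ = ⊤) :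
    finrank K ↥(W ⊓ LinearMap.ker φ) + finrank K N = finrank K W := by
  have hrange : LinearMap.range (φ.domRestrict W) = ⊤ := by
    rw [LinearMap.range_domRestrict, hW]
  have hker : LinearMap.ker (φ.domRestrict W) = (W ⊓ LinearMap.ker φ).comap W.subtype := by
    rw [LinearMap.ker_domRestrict, Submodule.comap_inf, Submodule.comap_subtype_self, top_inf_eq]
  rw [← LinearMap.finrank_range_add_finrank_ker (φ.domRestrict W), hrange, finrank_top, hker,
    (Submodule.comapSubtypeEquivOfLe inf_le_left).finrank_eq, add_comm]

theorem exists_isRelPrime_sum_smul {k R ι : Type*} [Field k] [Infinite k] [CommSemiring R]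
    [UniqueFactorizationMonoid R] [Algebra k R] [Fintype ι] {f : R} (hf : f ≠ 0)
    (h : ι → R) (hgcd : ∀ d, (∀ i, d ∣ h i) → IsUnit d) :
    ∃ c : ι → k, IsRelPrime f (∑ i, c i • h i) := by
  classical
  let W (p : R) : Submodule k (ι → k) :=
    ((Ideal.span {p}).restrictScalars k).comap (Fintype.linearCombination k h)
  have mem_W (p : R) (c : ι → k) : c ∈ W p ↔ p ∣ ∑ i, c i • h i := by
    simp [W, Ideal.mem_span_singleton, Fintype.linearCombination_apply]
  have hW : ⊤ ∉ (UniqueFactorizationMonoid.factors f).toFinset.image W := by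
    simp only [Finset.mem_image, Multiset.mem_toFinset, not_exists, not_and]
    intro p hp hWp
    refine (UniqueFactorizationMonoid.irreducible_of_factor p hp).not_isUnit (hgcd p fun i => ?_)
    simpa [Pi.single_apply] using (mem_W p (Pi.single i 1)).1 (hWp ▸ Submodule.mem_top)
  obtain ⟨c, hc⟩ :=
    (Set.ne_univ_iff_exists_notMem _).1 (Subspace.biUnion_ne_univ_of_top_notMem hW)
  refine ⟨c, WfDvdMonoid.isRelPrime_of_no_irreducible_factors (fun h0 => hf h0.1) ?_⟩
  intro z hz hzf hzg
  obtain ⟨p, hp, hzp⟩ := UniqueFactorizationMonoid.exists_mem_factors_of_dvd hf hz hzf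
  refine hc (Set.mem_biUnion (Finset.mem_image_of_mem W (Multiset.mem_toFinset.2 hp)) ?_)
  exact (mem_W p c).2 (hzp.symm.dvd.trans hzg)

namespace MvPolynomial

variable {σ k : Type*}

theorem finrank_restrictTotalDegree_fin_two [Field k] (e : ℕ) :
    finrank k (restrictTotalDegree (Fin 2) k e) = (e + 2).choose 2 := by
  rw [restrictTotalDegree, finrank_eq_nat_card_basis (basisRestrictSupport k _)]
  exact Finsupp.natCard_setOf_sum_le_fin_two e

theorem map_mulLeft_restrictTotalDegree_le [CommSemiring k] {p : MvPolynomial σ k} {n d : ℕ}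
    (h : p.totalDegree + n ≤ d) :
    (restrictTotalDegree σ k n).map (LinearMap.mulLeft k p) ≤ restrictTotalDegree σ k d := by
  rintro _ ⟨q, hq, rfl⟩
  rw [SetLike.mem_coe, mem_restrictTotalDegree] at hq
  rw [mem_restrictTotalDegree]
  exact (totalDegree_mul p q).trans (by omega)

theorem exists_totalDegree_le_card_eval_ne_zero {R : Type*} [CommRing R] [IsDomain R]
    {T : Finset (σ → R)} {x : σ → R} (hx : x ∉ T) :
    ∃ p : MvPolynomial σ R, p.totalDegree ≤ T.card ∧ (∀ y ∈ T, eval y p = 0) ∧ eval x p ≠ 0 := by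
  classical
  induction T using Finset.induction_on with
  | empty => exact ⟨1, by simp, by simp, by simp⟩
  | insert y T hy ih =>
    obtain ⟨p, hdeg, hT, hxp⟩ := ih fun h => hx (Finset.mem_insert_of_mem h)
    obtain ⟨i, hi⟩ := Function.ne_iff.1 fun h : x = y => hx (h ▸ Finset.mem_insert_self y T)
    refine ⟨(X i - C (y i)) * p, ?_, ?_, by simp [sub_eq_zero, hi, hxp]⟩
    · rw [Finset.card_insert_of_notMem hy]
      refine (totalDegree_mul _ _).trans ?_
      have : (X i - C (y i) : MvPolynomial σ R).totalDegree ≤ 1 :=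
        (totalDegree_sub _ _).trans (by simp [totalDegree_X])
      omega
    · exact Finset.forall_mem_insert _ _ _ |>.2 ⟨by simp, fun z hz => by simp [hT z hz]⟩

variable [Field k]

theorem finrank_map_mulLeft {p : MvPolynomial σ k} (hp : p ≠ 0)
    (W : Submodule k (MvPolynomial σ k)) :
    finrank k (W.map (LinearMap.mulLeft k p)) = finrank k W :=
  (Submodule.equivMapOfInjective _ (mul_right_injective₀ hp) W).finrank_eq.symm

theorem map_mulLeft_inf_map_mulLeft_le {f g : MvPolynomial σ k} (hfg : IsRelPrime f g)
    (n m : ℕ) :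
    (restrictTotalDegree σ k (g.totalDegree + n)).map (LinearMap.mulLeft k f) ⊓
        (restrictTotalDegree σ k m).map (LinearMap.mulLeft k g) ≤
      (restrictTotalDegree σ k n).map (LinearMap.mulLeft k (f * g)) := by
  rintro _ ⟨⟨a, ha, rfl⟩, ⟨b, -, hba⟩⟩
  simp only [LinearMap.mulLeft_apply] at hba ⊢
  obtain ⟨c, rfl⟩ : g ∣ a := hfg.symm.dvd_of_dvd_mul_left ⟨b, hba.symm⟩
  rcases eq_or_ne (g * c) 0 with hgc | hgc
  · simp [hgc]
  obtain ⟨hg, hc⟩ := mul_ne_zero_iff.1 hgc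
  refine ⟨c, ?_, mul_assoc f g c⟩
  rw [SetLike.mem_coe, mem_restrictTotalDegree, totalDegree_mul_of_isDomain hg hc] at ha
  rw [SetLike.mem_coe, mem_restrictTotalDegree]
  omega

noncomputable def evalOn (S : Finset (σ → k)) : MvPolynomial σ k →ₗ[k] (S → k) :=
  LinearMap.pi fun x => (aeval (x : σ → k)).toLinearMap

@[simp]
theorem evalOn_apply (S : Finset (σ → k)) (p : MvPolynomial σ k) (x : S) :
    evalOn S p x = eval (x : σ → k) p := by
  simp [evalOn]

theorem map_mulLeft_le_ker_evalOn {S : Finset (σ → k)} {p : MvPolynomial σ k}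
    (hp : ∀ x ∈ S, eval x p = 0) (W : Submodule k (MvPolynomial σ k)) :
    W.map (LinearMap.mulLeft k p) ≤ LinearMap.ker (evalOn S) := by
  rintro _ ⟨q, -, rfl⟩
  ext x
  simp [hp x x.2]

theorem map_evalOn_restrictTotalDegree {S : Finset (σ → k)} {d : ℕ} (hS : S.card ≤ d + 1) :
    (restrictTotalDegree σ k d).map (evalOn S) = ⊤ := by
  classical
  refine eq_top_iff.2 fun v _ => ?_
  rw [← Finset.univ_sum_single v]
  refine Submodule.sum_mem _ fun x _ => ?_
  obtain ⟨p, hdeg, hvanish, hx⟩ :=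
    exists_totalDegree_le_card_eval_ne_zero (Finset.notMem_erase (x : σ → k) S)
  have hp : evalOn S p = Pi.single x (eval (x : σ → k) p) := by
    ext y
    rcases eq_or_ne y x with rfl | hyx
    · simp
    · simp [hyx, hvanish y (Finset.mem_erase.2 ⟨Subtype.coe_ne_coe.2 hyx, y.2⟩)]
  refine ⟨(v x * (eval (x : σ → k) p)⁻¹) • p, Submodule.smul_mem _ _ ?_, ?_⟩
  · rw [mem_restrictTotalDegree]
    rw [Finset.card_erase_of_mem x.2] at hdeg
    omega
  · rw [map_smul, hp, ← Pi.single_smul', smul_eq_mul, mul_assoc, inv_mul_cancel₀ hx, mul_one]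

theorem card_le_totalDegree_mul_of_isRelPrime {f g : MvPolynomial (Fin 2) k} (hf : f ≠ 0)
    (hg : g ≠ 0) (hfg : IsRelPrime f g) {S : Finset (Fin 2 → k)}
    (hS : ∀ x ∈ S, eval x f = 0 ∧ eval x g = 0) :
    S.card ≤ f.totalDegree * g.totalDegree := by
  set a := f.totalDegree
  set b := g.totalDegree
  set e := S.card
  let V n := restrictTotalDegree (Fin 2) k n
  let U₁ := (V (b + e)).map (LinearMap.mulLeft k f)
  let U₂ := (V (a + e)).map (LinearMap.mulLeft k g)
  have hU₁ : finrank k U₁ = (b + e + 2).choose 2 := by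
    rw [finrank_map_mulLeft hf, finrank_restrictTotalDegree_fin_two]
  have hU₂ : finrank k U₂ = (a + e + 2).choose 2 := by
    rw [finrank_map_mulLeft hg, finrank_restrictTotalDegree_fin_two]
  have hinf : finrank k ↥(U₁ ⊓ U₂) ≤ (e + 2).choose 2 := by
    calc finrank k ↥(U₁ ⊓ U₂) ≤ finrank k ((V e).map (LinearMap.mulLeft k (f * g))) :=
          Submodule.finrank_mono (map_mulLeft_inf_map_mulLeft_le hfg e (a + e))
      _ = (e + 2).choose 2 := by
          rw [finrank_map_mulLeft (mul_ne_zero hf hg), finrank_restrictTotalDegree_fin_two]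
  have hsup : U₁ ⊔ U₂ ≤ V (a + b + e) ⊓ LinearMap.ker (evalOn S) :=
    sup_le
      (le_inf (map_mulLeft_restrictTotalDegree_le (by omega))
        (map_mulLeft_le_ker_evalOn (fun x hx => (hS x hx).1) _))
      (le_inf (map_mulLeft_restrictTotalDegree_le (by omega))
        (map_mulLeft_le_ker_evalOn (fun x hx => (hS x hx).2) _))
  have hker : finrank k ↥(V (a + b + e) ⊓ LinearMap.ker (evalOn S)) + e =
      (a + b + e + 2).choose 2 := by
    have := Submodule.finrank_inf_ker_add_finrank (evalOn S) (V (a + b + e))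
      (map_evalOn_restrictTotalDegree (by omega))
    rwa [finrank_fintype_fun_eq_card, Fintype.card_coe, finrank_restrictTotalDegree_fin_two] at this
  have := Submodule.finrank_sup_add_finrank_inf_eq U₁ U₂
  have := Submodule.finrank_mono hsup
  have := Nat.choose_two_add_add_add_choose_two a b e
  omega

theorem encard_setOf_eval_eq_zero_le_of_isRelPrime {f g : MvPolynomial (Fin 2) k}
    (hfg : IsRelPrime f g) :
    {x : Fin 2 → k | eval x f = 0 ∧ eval x g = 0}.encard ≤ f.totalDegree * g.totalDegree := by
  rcases eq_or_ne f 0 with rfl | hf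
  · simp [fun x => ((isRelPrime_zero_left.1 hfg).map (eval x)).ne_zero]
  rcases eq_or_ne g 0 with rfl | hg
  · simp [fun x => ((isRelPrime_zero_right.1 hfg).map (eval x)).ne_zero]
  exact_mod_cast Set.encard_le_coe_of_forall_finset fun S hS =>
    card_le_totalDegree_mul_of_isRelPrime hf hg hfg fun x hx => hS hx

end MvPolynomial

theorem stmt_2_general {k : Type*} [Field k] [IsAlgClosed k] (m t : ℕ)
    (h : Fin t → MvPolynomial (Fin 2) k)
    (hdeg : ∀ i, (h i).totalDegree ≤ m)
    (hgcd : ∀ d : MvPolynomial (Fin 2) k, (∀ i, d ∣ h i) → IsUnit d) :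
    {p : k × k | ∀ i, MvPolynomial.eval ![p.1, p.2] (h i) = 0}.Finite ∧
    {p : k × k | ∀ i, MvPolynomial.eval ![p.1, p.2] (h i) = 0}.ncard ≤ m ^ 2 := by
  obtain ⟨i₀, hi₀⟩ : ∃ i, h i ≠ 0 := by
    by_contra! h0
    simpa [isUnit_iff_totalDegree_of_isReduced] using hgcd (X 0) fun i => h0 i ▸ dvd_zero _
  obtain ⟨c, hc⟩ := exists_isRelPrime_sum_smul (k := k) hi₀ h hgcd
  have hcdeg : (∑ i, c i • h i).totalDegree ≤ m :=
    totalDegree_finsetSum_le fun i _ => (totalDegree_smul_le _ _).trans (hdeg i)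
  have hzeros (x : Fin 2 → k) (hx : ∀ i, eval x (h i) = 0) :
      eval x (h i₀) = 0 ∧ eval x (∑ i, c i • h i) = 0 :=
    ⟨hx i₀, by simp [hx]⟩
  rw [← Set.encard_le_coe_iff_finite_ncard_le]
  calc _ ≤ {x : Fin 2 → k | eval x (h i₀) = 0 ∧ eval x (∑ i, c i • h i) = 0}.encard :=
        Set.encard_le_encard_of_injOn (f := (finTwoArrowEquiv k).symm)
          (fun p hp => hzeros ![p.1, p.2] hp) (finTwoArrowEquiv k).symm.injective.injOn
    _ ≤ (h i₀).totalDegree * (∑ i, c i • h i).totalDegree :=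
        encard_setOf_eval_eq_zero_le_of_isRelPrime hc
    _ ≤ (m ^ 2 : ℕ) := by
        rw [sq]
        exact_mod_cast Nat.mul_le_mul (hdeg i₀) hcdeg

/-- Statement (14.1): polynomials in two variables of degree at most m over an
algebraically closed field whose gcd is 1 have at most m² common roots. -/
theorem stmt_2 {k : Type*} [Field k] [IsAlgClosed k] (m t : ℕ) (ht : 1 ≤ t)
    (h : Fin t → MvPolynomial (Fin 2) k)
    (hdeg : ∀ i, (h i).totalDegree ≤ m)
    (hgcd : ∀ d : MvPolynomial (Fin 2) k, (∀ i, d ∣ h i) → IsUnit d) :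
    {p : k × k | ∀ i, MvPolynomial.eval ![p.1, p.2] (h i) = 0}.Finite ∧
    {p : k × k | ∀ i, MvPolynomial.eval ![p.1, p.2] (h i) = 0}.ncard ≤ m ^ 2 :=
  stmt_2_general m t h hdeg hgcd
end

section
/- Let k be a field and let Γ be a basic matrix algebra in k^{t×t}, i.e. a unital subalgebra of the algebra of t×t matrices over k such that every matrix in Γ is upper triangular and such that whenever a matrix A belongs to Γ, the diagonal matrix diag(A₁₁, …, A_tt) with the same diagonal entries also belongs to Γ. Then the Jacobson radical of the ring Γ equals the set of all matrices in Γ whose diagonal entries are all zero. -/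
/-!
On upper triangular matrices each diagonal entry `A ↦ A i i` is a ring homomorphism, onto `k`
for a unital subalgebra. A surjection onto a field kills the Jacobson radical, so radical
elements have zero diagonal. Conversely, if `A` has zero diagonal then so does every `y * A`,
which is therefore strictly upper triangular, hence nilpotent (its characteristic polynomial is
`X ^ t`), and `y * A + 1` is a unit.
-/

namespace Matrix

variable {m R : Type*} [Fintype m] [LinearOrder m]

theorem IsUpperTriangular.mul_apply_self [NonUnitalNonAssocSemiring R] {M N : Matrix m m R}
    (hM : M.IsUpperTriangular) (hN : N.IsUpperTriangular) (i : m) :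
    (M * N) i i = M i i * N i i := by
  rw [mul_apply, Finset.sum_eq_single i]
  · intro l _ hli
    rcases hli.lt_or_gt with hl | hl
    · rw [hM hl, zero_mul]
    · rw [hN hl, mul_zero]
  · simp

theorem IsUpperTriangular.isNilpotent [CommRing R] {M : Matrix m m R}
    (hM : M.IsUpperTriangular) (hdiag : ∀ i, M i i = 0) : IsNilpotent M :=
  ⟨Fintype.card m, by
    simpa [charpoly_of_isUpperTriangular M hM, hdiag] using M.aeval_self_charpoly⟩

def diagEntryAlgHom [CommSemiring R] (S : Subalgebra R (Matrix m m R))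
    (hS : ∀ A ∈ S, A.IsUpperTriangular) (i : m) : S →ₐ[R] R where
  toFun A := (A : Matrix m m R) i i
  map_one' := one_apply_eq i
  map_mul' A B := (hS A A.2).mul_apply_self (hS B B.2) i
  map_zero' := rfl
  map_add' _ _ := rfl
  commutes' r := by simp [algebraMap_eq_diagonal]

end Matrix

theorem RingHom.map_eq_zero_of_mem_jacobson {R K : Type*} [Ring R] [DivisionRing K]
    (f : R →+* K) (hf : Function.Surjective f) {x : R} (hx : x ∈ Ring.jacobson R) : f x = 0 := by
  have : RingHomSurjective f := ⟨hf⟩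
  simpa [IsSemisimpleRing.jacobson_eq_bot] using Ring.map_jacobson_le f ⟨x, hx, rfl⟩

theorem Ideal.mem_jacobson_bot_of_forall_isNilpotent_mul {R : Type*} [Ring R] {x : R}
    (hx : ∀ y, IsNilpotent (y * x)) : x ∈ Ideal.jacobson (⊥ : Ideal R) := by
  refine Ideal.mem_jacobson_iff.2 fun y => ?_
  obtain ⟨u, hu⟩ := (hx y).isUnit_add_one
  refine ⟨↑u⁻¹, ?_⟩
  rw [Ideal.mem_bot, sub_eq_zero, mul_assoc, ← mul_add_one, ← hu, Units.inv_mul]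

theorem stmt_13_general {k : Type*} [Field k] (t : ℕ)
    (Γ : Subalgebra k (Matrix (Fin t) (Fin t) k))
    (htri : ∀ A ∈ Γ, ∀ i j : Fin t, j < i → A i j = 0) :
    ∀ A : Γ, A ∈ Ideal.jacobson (⊥ : Ideal Γ) ↔
      ∀ i : Fin t, (A : Matrix (Fin t) (Fin t) k) i i = 0 := by
  have hΓ : ∀ A ∈ Γ, A.IsUpperTriangular := fun A hA _ _ => htri A hA _ _
  intro A
  constructor
  · intro hA i
    rw [Ideal.jacobson_bot] at hA
    let φ := Matrix.diagEntryAlgHom Γ hΓ i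
    exact φ.toRingHom.map_eq_zero_of_mem_jacobson (fun c => ⟨algebraMap k Γ c, φ.commutes c⟩) hA
  · intro hA
    refine Ideal.mem_jacobson_bot_of_forall_isNilpotent_mul fun y => ?_
    rw [← IsNilpotent.map_iff (f := Γ.val) Subtype.val_injective]
    refine (hΓ _ (y * A).2).isNilpotent fun i => ?_
    simp [(hΓ y y.2).mul_apply_self (hΓ A A.2) i, hA i]

/-- The Jacobson radical of a basic matrix algebra Γ ⊆ k^{t×t} (a unital subalgebra
of upper triangular matrices closed under taking the diagonal part) is the set of
its matrices with zero diagonal. -/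
theorem stmt_13 {k : Type*} [Field k] (t : ℕ)
    (Γ : Subalgebra k (Matrix (Fin t) (Fin t) k))
    (htri : ∀ A ∈ Γ, ∀ i j : Fin t, j < i → A i j = 0)
    (hdiag : ∀ A ∈ Γ, Matrix.diagonal (fun i => A i i) ∈ Γ) :
    ∀ A : Γ, A ∈ Ideal.jacobson (⊥ : Ideal Γ) ↔
      ∀ i : Fin t, (A : Matrix (Fin t) (Fin t) k) i i = 0 :=
  stmt_13_general t Γ htri
end

section
/- Let k be a field and let Γ be a basic matrix algebra in k^{t×t}, i.e. a unital subalgebra of the algebra of t×t matrices over k such that every matrix in Γ is upper triangular and such that whenever a matrix A belongs to Γ, the diagonal matrix diag(A₁₁, …, A_tt) with the same diagonal entries also belongs to Γ. Let R = {A ∈ Γ : A₁₁ = ⋯ = A_tt = 0} be the set of matrices in Γ with zero diagonal, define the equivalence relation ∼ on {1, …, t} by i ∼ j iff A_ii = A_jj for all A ∈ Γ, let I_β be an equivalence class of ∼, and let e_β = Σ_{i ∈ I_β} E_ii, where E_ii are the diagonal matrix units. Then e_β ∈ Γ, and the k-vector space R e_β = {A e_β : A ∈ R} has dimension dim_k(Γ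 e_β) − 1, where Γ e_β = {A e_β : A ∈ Γ}. -/
/-!
On upper triangular matrices the diagonal `A ↦ (A i i)ᵢ` is multiplicative, so the diagonals of
`Γ` form a subalgebra of `kᵗ`. In a subalgebra `S` of `kᵗ` the indicator of the class of `c` is
the product, over the `j` outside that class, of `(f - f j) / (f c - f j)` for some `f ∈ S`
separating `j` from `c`. Since `Γ` contains the diagonal part of each of its elements, the
diagonal matrix with this indicator as diagonal, which is `e_β`, lies in `Γ`.

For the dimension, `M ↦ M c c` is a linear form on `Γ e_β`, nonzero at `e_β`, and its kernel is
`R e_β`: if `A ∈ Γ` and `A c c = 0`, then `A` vanishes on the diagonal along the whole class of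
`c`, so `diag(A) e_β = 0` and `A e_β = (A - diag(A)) e_β` with `A - diag(A) ∈ R`.
-/

open Matrix Module LinearMap

section PiSubalgebra

variable {k ι : Type*} [Field k] [Fintype ι]

open scoped Classical in
theorem Subalgebra.ite_forall_apply_eq_mem (S : Subalgebra k (ι → k)) (c : ι) :
    (fun i => if ∀ f ∈ S, f i = f c then (1 : k) else 0) ∈ S := by
  set P : ι → Prop := fun i => ∀ f ∈ S, f i = f c
  have hsep : ∀ j, ∃ g ∈ S, g j = (if P j then 1 else 0) ∧ ∀ i, P i → g i = 1 := by
    intro j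
    by_cases hj : P j
    · exact ⟨1, S.one_mem, by simp [hj], fun _ _ => rfl⟩
    obtain ⟨f, hf, hfj⟩ : ∃ f ∈ S, f j ≠ f c := by simpa [P] using hj
    have hne : f c - f j ≠ 0 := sub_ne_zero.2 hfj.symm
    refine ⟨(f c - f j)⁻¹ • (f - algebraMap k _ (f j)),
      S.smul_mem (S.sub_mem hf (S.algebraMap_mem _)) _, by simp [hj], fun i hi => ?_⟩
    simp [hi f hf, hne]
  choose g hgS hgj hgP using hsep
  convert S.prod_mem fun j (_ : j ∈ Finset.univ) => hgS j using 1
  funext i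
  rw [Finset.prod_apply]
  by_cases hi : P i
  · rw [if_pos hi, Finset.prod_eq_one fun j _ => hgP j i hi]
  · rw [if_neg hi, Finset.prod_eq_zero (Finset.mem_univ i) (by simpa [hi] using hgj i)]

end PiSubalgebra

section ClassIdempotent

variable {k n : Type*} [Field k] [Fintype n] [DecidableEq n]

open scoped Classical in
/-- The idempotent `e_β = ∑_{i ∈ I_β} E_ii` of the class `I_β` of `c`. -/
noncomputable def Subalgebra.classIdempotent (Γ : Subalgebra k (Matrix n n k)) (c : n) :
    Matrix n n k :=
  diagonal fun i => if ∀ A ∈ Γ, A i i = A c c then 1 else 0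

variable (Γ : Subalgebra k (Matrix n n k)) (c : n)

open scoped Classical in
theorem Subalgebra.sum_ite_single_eq_classIdempotent :
    ∑ i, (if ∀ A ∈ Γ, A i i = A c c then single i i (1 : k) else 0) =
      Γ.classIdempotent c := by
  rw [Subalgebra.classIdempotent, ← sum_single_eq_diagonal]
  refine Finset.sum_congr rfl fun i _ => ?_
  split_ifs <;> simp

@[simp]
theorem Subalgebra.classIdempotent_apply_self : Γ.classIdempotent c c c = 1 := by
  simp [Subalgebra.classIdempotent]

@[simp]
theorem Subalgebra.mul_classIdempotent_apply_self (A : Matrix n n k) :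
    (A * Γ.classIdempotent c) c c = A c c := by
  simp [Subalgebra.classIdempotent, mul_diagonal]

theorem Subalgebra.diagonal_diag_mul_classIdempotent {A : Matrix n n k} (hA : A ∈ Γ)
    (hc : A c c = 0) : diagonal (fun i => A i i) * Γ.classIdempotent c = 0 := by
  rw [Subalgebra.classIdempotent, diagonal_mul_diagonal, ← diagonal_zero]
  congr 1
  funext i
  split_ifs with hi
  · rw [hi A hA, hc, zero_mul]
  · rw [mul_zero]

theorem Subalgebra.setOf_mul_classIdempotent_eq :
    {M | ∃ A ∈ Γ, M = A * Γ.classIdempotent c} =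
      ↑((Subalgebra.toSubmodule Γ).map (mulRight k (Γ.classIdempotent c))) := by
  ext M
  simp [eq_comm]

theorem Subalgebra.setOf_zero_diag_mul_classIdempotent_eq
    (hdiag : ∀ A ∈ Γ, diagonal (fun i => A i i) ∈ Γ) :
    {M | ∃ A ∈ Γ, (∀ i, A i i = 0) ∧ M = A * Γ.classIdempotent c} =
      ↑((Subalgebra.toSubmodule Γ).map (mulRight k (Γ.classIdempotent c)) ⊓
        ker (entryLinearMap k k c c : Matrix n n k →ₗ[k] k)) := by
  ext M
  simp only [Set.mem_ofPred_eq, SetLike.mem_coe, Submodule.mem_inf, Submodule.mem_map,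
    Subalgebra.mem_toSubmodule, mulRight_apply, mem_ker, entryLinearMap_apply]
  constructor
  · rintro ⟨A, hA, hdiag0, rfl⟩
    exact ⟨⟨A, hA, rfl⟩, by simp [hdiag0 c]⟩
  · rintro ⟨⟨A, hA, rfl⟩, hc⟩
    rw [Subalgebra.mul_classIdempotent_apply_self] at hc
    refine ⟨A - diagonal (fun i => A i i), Γ.sub_mem hA (hdiag A hA), by simp, ?_⟩
    rw [sub_mul, Γ.diagonal_diag_mul_classIdempotent c hA hc, sub_zero]

end ClassIdempotent

section UpperTriangular

variable {k n : Type*} [Field k] [Fintype n] [LinearOrder n]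

theorem Matrix.IsUpperTriangular.diag_mul {R : Type*} [NonUnitalNonAssocSemiring R]
    {A B : Matrix n n R} (hA : A.IsUpperTriangular) (hB : B.IsUpperTriangular) :
    (A * B).diag = A.diag * B.diag := by
  funext i
  rw [diag_apply, mul_apply, Pi.mul_apply]
  refine Finset.sum_eq_single i (fun m _ hm => ?_) (by simp)
  rcases hm.lt_or_gt with h | h
  · rw [hA h, zero_mul]
  · rw [hB h, mul_zero]

def Subalgebra.diagAlgHom (Γ : Subalgebra k (Matrix n n k))
    (htri : ∀ A ∈ Γ, A.IsUpperTriangular) : Γ →ₐ[k] (n → k) :=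
  .ofLinearMap ((diagLinearMap n k k).comp (Subalgebra.val Γ).toLinearMap)
    (by ext; simp) (fun A B => (htri A A.2).diag_mul (htri B B.2))

@[simp]
theorem Subalgebra.diagAlgHom_apply (Γ : Subalgebra k (Matrix n n k))
    (htri : ∀ A ∈ Γ, A.IsUpperTriangular) (A : Γ) :
    Γ.diagAlgHom htri A = (A : Matrix n n k).diag :=
  rfl

variable (Γ : Subalgebra k (Matrix n n k))

open scoped Classical in
theorem Subalgebra.classIdempotent_mem (htri : ∀ A ∈ Γ, A.IsUpperTriangular)
    (hdiag : ∀ A ∈ Γ, diagonal (fun i => A i i) ∈ Γ) (c : n) :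
    Γ.classIdempotent c ∈ Γ := by
  obtain ⟨A, hA⟩ := (Γ.diagAlgHom htri).range.ite_forall_apply_eq_mem c
  have hclass (i : n) :
      (∀ f ∈ (Γ.diagAlgHom htri).range, f i = f c) ↔ ∀ A ∈ Γ, A i i = A c c := by
    simp
  simp_rw [hclass] at hA
  rw [Subalgebra.classIdempotent, ← hA]
  exact hdiag A A.2

end UpperTriangular

section Codimension

variable {k V : Type*} [Field k] [AddCommGroup V] [Module k V]

theorem Submodule.finrank_inf_ker_add_one {W : Submodule k V} [FiniteDimensional k W]
    {φ : Dual k V} {w : V} (hw : w ∈ W) (hφw : φ w ≠ 0) :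
    finrank k ↥(W ⊓ ker φ) + 1 = finrank k W := by
  have hne : φ.domRestrict W ≠ 0 := fun h =>
    hφw (by simpa using LinearMap.congr_fun h ⟨w, hw⟩)
  rw [← Dual.finrank_ker_add_one_of_ne_zero hne, ker_domRestrict,
    ← Submodule.finrank_map_subtype_eq, Submodule.map_comap_subtype]

end Codimension

open scoped Classical in
/-- For a basic matrix algebra Γ ⊆ k^{t×t} with radical R (its zero-diagonal matrices)
and the idempotent e_β = Σ_{i ∈ I_β} E_ii attached to an equivalence class I_β of the
relation i ∼ j ⟺ (A_ii = A_jj for all A ∈ Γ), one has e_β ∈ Γ and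
dim_k (R e_β) = dim_k (Γ e_β) − 1. -/
theorem stmt_14 {k : Type*} [Field k] (t : ℕ)
    (Γ : Subalgebra k (Matrix (Fin t) (Fin t) k))
    (htri : ∀ A ∈ Γ, ∀ i j : Fin t, j < i → A i j = 0)
    (hdiag : ∀ A ∈ Γ, Matrix.diagonal (fun i => A i i) ∈ Γ)
    (c : Fin t) (e : Matrix (Fin t) (Fin t) k)
    (he : e = ∑ i : Fin t,
      if ∀ A ∈ Γ, A i i = A c c then Matrix.single i i (1 : k) else 0) :
    e ∈ Γ ∧
    Module.finrank k
        (Submodule.span k {M : Matrix (Fin t) (Fin t) k |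
          ∃ A ∈ Γ, (∀ i : Fin t, A i i = 0) ∧ M = A * e}) =
      Module.finrank k
        (Submodule.span k {M : Matrix (Fin t) (Fin t) k | ∃ A ∈ Γ, M = A * e}) - 1 := by
  rw [Γ.sum_ite_single_eq_classIdempotent c] at he
  subst he
  refine ⟨Γ.classIdempotent_mem (fun A hA _ _ => htri A hA _ _) hdiag c, ?_⟩
  rw [Γ.setOf_zero_diag_mul_classIdempotent_eq c hdiag, Γ.setOf_mul_classIdempotent_eq c,
    Submodule.span_eq, Submodule.span_eq]
  have he_mem : Γ.classIdempotent c ∈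
      (Subalgebra.toSubmodule Γ).map (mulRight k (Γ.classIdempotent c)) :=
    ⟨1, Γ.one_mem, one_mul _⟩
  have hcodim := Submodule.finrank_inf_ker_add_one he_mem (φ := entryLinearMap k k c c) (by simp)
  omega
end
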